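/- arXiv:0711.1644 — 10 statements merged into one kernel-verified Lean document; each statement's English description precedes it below -/
import Mathlib

section
/- Let α, β : ℤ → ℂ be sequences with α(n)β(n) ∉ {0,1} for all n, and define the homogeneous Ablowitz–Ladik coefficients recursively by ĝ₀₊ = 1/2, f̂₀₊ = −α⁺, ĥ₀₊ = β, ĝ_{ℓ+1,+} − ĝ_{ℓ+1,+}⁻ = α ĥ_{ℓ,+}⁻ + β f̂_{ℓ,+}, f̂_{ℓ+1,+}⁻ = f̂_{ℓ,+} − α (ĝ_{ℓ+1,+} + ĝ_{ℓ+1,+}⁻), and ĥ_{ℓ+1,+} = ĥ_{ℓ,+}⁻ + β (ĝ_{ℓ+1,+} + ĝ_{ℓ+1,+}⁻), with all summation constants set to zero. Then for every ℓ ∈ ℕ₀, the relation g_{ℓ,+} − g_{ℓ,+}⁻ = α h_{ℓ,+} + β f_{ℓ,+}⁻ holds, where for a sequence c we write c⁻(n) = c(n−1). -/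
/-- History of the homogeneous plus Ablowitz–Ladik coefficients
`(f̂_{ℓ,+}, ĝ_{ℓ,+}, ĥ_{ℓ,+})` (all summation constants zero, `c₀₊ = 1`).
`ALPhist α β ℓ m` returns the triple at level `m` for `m ≤ ℓ`. -/
noncomputable def ALPhist (α β : ℤ → ℂ) : ℕ → ℕ → ((ℤ → ℂ) × (ℤ → ℂ) × (ℤ → ℂ))
  | 0, _ => (fun n => -α (n + 1), fun _ => (2 : ℂ)⁻¹, fun n => β n)
  | ℓ + 1, m =>
      if m ≤ ℓ then ALPhist α β ℓ m
      else
        let prev := ALPhist α β ℓ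
        let g1 : ℤ → ℂ := fun n =>
          (∑ k ∈ Finset.range (ℓ + 1), (prev (ℓ - k)).1 n * (prev k).2.2 n)
            - ∑ k ∈ Finset.range ℓ, (prev (ℓ - k)).2.1 n * (prev (k + 1)).2.1 n
        (fun n => (prev ℓ).1 (n + 1) - α (n + 1) * (g1 (n + 1) + g1 n),
         g1,
         fun n => (prev ℓ).2.2 (n - 1) + β n * (g1 n + g1 (n - 1)))

/-- The homogeneous coefficient `f̂_{ℓ,+}`. -/
noncomputable def fhatP (α β : ℤ → ℂ) (ℓ : ℕ) : ℤ → ℂ := (ALPhist α β ℓ ℓ).1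
/-- The homogeneous coefficient `ĝ_{ℓ,+}`. -/
noncomputable def ghatP (α β : ℤ → ℂ) (ℓ : ℕ) : ℤ → ℂ := (ALPhist α β ℓ ℓ).2.1
/-- The homogeneous coefficient `ĥ_{ℓ,+}`. -/
noncomputable def hhatP (α β : ℤ → ℂ) (ℓ : ℕ) : ℤ → ℂ := (ALPhist α β ℓ ℓ).2.2

/-!
Write `σĝ_j = ĝ_j + ĝ_j⁻`. The `f̂`- and `ĥ`-recursions reduce the difference of the linear
convolution `∑ f̂_{ℓ-k} ĥ_k` to `β f̂_ℓ + α ĥ_ℓ⁻` plus convolutions of `σĝ` against `f̂` and `ĥ⁻`,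
while the discrete product rule `xy - x⁻y⁻ = (x + x⁻)(y - y⁻)`, summed symmetrically, together with
the difference equation at lower levels produces exactly the same convolutions from the quadratic
term. Hence, by strong induction, `ĝ_{ℓ+1} - ĝ_{ℓ+1}⁻ = α ĥ_ℓ⁻ + β f̂_ℓ`, which the `f̂`- and
`ĥ`-recursions turn into the claimed identity at level `ℓ + 1`.
-/

open Finset

section Reflection

variable {R : Type*} [CommRing R]

theorem Finset.sum_range_mul_reflect (u v : ℕ → R) (ℓ : ℕ) :
    ∑ k ∈ range ℓ, u (ℓ - k) * v (k + 1) = ∑ k ∈ range ℓ, u (k + 1) * v (ℓ - k) := by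
  rw [← sum_range_reflect]
  refine sum_congr rfl fun k hk => ?_
  have hk : k < ℓ := mem_range.mp hk
  rw [show ℓ - (ℓ - 1 - k) = k + 1 by omega, show ℓ - 1 - k + 1 = ℓ - k by omega]

/-- The cross terms `y (ℓ - k) * x (k + 1) - x (ℓ - k) * y (k + 1)` cancel in pairs under
`k ↦ ℓ - 1 - k`. -/
theorem Finset.sum_range_mul_sub_sum_range_mul (x y : ℕ → R) (ℓ : ℕ) :
    ∑ k ∈ range ℓ, x (ℓ - k) * x (k + 1) - ∑ k ∈ range ℓ, y (ℓ - k) * y (k + 1)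
      = ∑ k ∈ range ℓ, (x (ℓ - k) + y (ℓ - k)) * (x (k + 1) - y (k + 1)) := by
  have hcross : ∑ k ∈ range ℓ, x (ℓ - k) * y (k + 1) = ∑ k ∈ range ℓ, y (ℓ - k) * x (k + 1) :=
    (sum_range_mul_reflect x y ℓ).trans (sum_congr rfl fun _ _ => mul_comm _ _)
  simp only [add_mul, mul_sub, sum_add_distrib, sum_sub_distrib] at hcross ⊢
  linear_combination hcross

end Reflection

/-- The recursion of the homogeneous plus Ablowitz–Ladik coefficients, with `ĝ_{ℓ+1}` given
by its nonlinear closed form instead of the difference equation it is meant to solve. -/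
structure IsHomogeneousALPlus {R : Type*} [CommRing R] (α β : ℤ → R) (f g h : ℕ → ℤ → R) :
    Prop where
  f_zero : ∀ n, f 0 (n - 1) = -α n
  g_zero : ∀ n, g 0 n = g 0 (n - 1)
  h_zero : ∀ n, h 0 n = β n
  g_succ : ∀ ℓ n, g (ℓ + 1) n
    = ∑ k ∈ range (ℓ + 1), f (ℓ - k) n * h k n - ∑ k ∈ range ℓ, g (ℓ - k) n * g (k + 1) n
  f_succ : ∀ ℓ n, f (ℓ + 1) (n - 1) = f ℓ n - α n * (g (ℓ + 1) n + g (ℓ + 1) (n - 1))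
  h_succ : ∀ ℓ n, h (ℓ + 1) n = h ℓ (n - 1) + β n * (g (ℓ + 1) n + g (ℓ + 1) (n - 1))

namespace IsHomogeneousALPlus

variable {R : Type*} [CommRing R] {α β : ℤ → R} {f g h : ℕ → ℤ → R}

theorem sum_f_mul_h (hr : IsHomogeneousALPlus α β f g h) (ℓ : ℕ) (n : ℤ) :
    ∑ k ∈ range (ℓ + 1), f (ℓ - k) n * h k n
      = β n * f ℓ n + ∑ k ∈ range ℓ, f (ℓ - (k + 1)) n * h k (n - 1)
        + β n * ∑ k ∈ range ℓ, f (ℓ - (k + 1)) n * (g (k + 1) n + g (k + 1) (n - 1)) := by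
  have hterm : ∀ k ∈ range ℓ, f (ℓ - (k + 1)) n * h (k + 1) n
      = f (ℓ - (k + 1)) n * h k (n - 1)
        + β n * (f (ℓ - (k + 1)) n * (g (k + 1) n + g (k + 1) (n - 1))) := by
    intro k _
    rw [hr.h_succ]
    ring
  rw [sum_range_succ', sum_congr rfl hterm, sum_add_distrib, ← mul_sum, Nat.sub_zero, hr.h_zero]
  ring

theorem sum_f_mul_h_sub_one (hr : IsHomogeneousALPlus α β f g h) (ℓ : ℕ) (n : ℤ) :
    ∑ k ∈ range (ℓ + 1), f (ℓ - k) (n - 1) * h k (n - 1)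
      = -α n * h ℓ (n - 1) + ∑ k ∈ range ℓ, f (ℓ - (k + 1)) n * h k (n - 1)
        - α n * ∑ k ∈ range ℓ, (g (ℓ - k) n + g (ℓ - k) (n - 1)) * h k (n - 1) := by
  have hterm : ∀ k ∈ range ℓ, f (ℓ - k) (n - 1) * h k (n - 1)
      = f (ℓ - (k + 1)) n * h k (n - 1)
        - α n * ((g (ℓ - k) n + g (ℓ - k) (n - 1)) * h k (n - 1)) := by
    intro k hk
    obtain ⟨j, hj⟩ : ∃ j, ℓ - k = j + 1 := ⟨ℓ - (k + 1), by have := mem_range.mp hk; omega⟩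
    rw [hj, hr.f_succ, show ℓ - (k + 1) = j by omega]
    ring
  rw [sum_range_succ, sum_congr rfl hterm, sum_sub_distrib, ← mul_sum, Nat.sub_self, hr.f_zero]
  ring

theorem g_succ_sub (hr : IsHomogeneousALPlus α β f g h) (ℓ : ℕ) (n : ℤ) :
    g (ℓ + 1) n - g (ℓ + 1) (n - 1) = α n * h ℓ (n - 1) + β n * f ℓ n := by
  induction ℓ using Nat.strong_induction_on with
  | _ ℓ ih =>
  set σ : ℕ → R := fun j => g j n + g j (n - 1)
  have hquad : ∑ k ∈ range ℓ, g (ℓ - k) n * g (k + 1) n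
        - ∑ k ∈ range ℓ, g (ℓ - k) (n - 1) * g (k + 1) (n - 1)
      = α n * ∑ k ∈ range ℓ, σ (ℓ - k) * h k (n - 1)
        + β n * ∑ k ∈ range ℓ, σ (ℓ - k) * f k n := by
    rw [sum_range_mul_sub_sum_range_mul (g · n) (g · (n - 1)), mul_sum, mul_sum,
      ← sum_add_distrib]
    refine sum_congr rfl fun k hk => ?_
    rw [ih k (mem_range.mp hk)]
    ring
  have hreflect : ∑ k ∈ range ℓ, f (ℓ - (k + 1)) n * σ (k + 1)
      = ∑ k ∈ range ℓ, σ (ℓ - k) * f k n := by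
    have hswap := sum_range_mul_reflect (fun j => f (j - 1) n) σ ℓ
    simp only [Nat.sub_sub, Nat.add_sub_cancel] at hswap
    rw [hswap]
    exact sum_congr rfl fun _ _ => mul_comm _ _
  rw [hr.g_succ, hr.g_succ, hr.sum_f_mul_h, hr.sum_f_mul_h_sub_one]
  linear_combination -hquad + β n * hreflect

theorem g_sub (hr : IsHomogeneousALPlus α β f g h) (ℓ : ℕ) (n : ℤ) :
    g ℓ n - g ℓ (n - 1) = α n * h ℓ n + β n * f ℓ (n - 1) := by
  cases ℓ with
  | zero => rw [hr.g_zero, hr.h_zero, hr.f_zero]; ring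
  | succ ℓ => rw [hr.g_succ_sub, hr.h_succ, hr.f_succ]; ring

end IsHomogeneousALPlus

theorem ALPhist_of_le (α β : ℤ → ℂ) {ℓ m : ℕ} (hm : m ≤ ℓ) :
    ALPhist α β ℓ m = ALPhist α β m m := by
  induction ℓ with
  | zero => rw [Nat.le_zero.mp hm]
  | succ ℓ ih =>
    rcases Nat.le_succ_iff.mp hm with hle | rfl
    · rw [ALPhist, if_pos hle, ih hle]
    · rfl

section Hat

variable (α β : ℤ → ℂ) (ℓ : ℕ) (n : ℤ)

theorem ghatP_succ : ghatP α β (ℓ + 1) n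
    = ∑ k ∈ range (ℓ + 1), fhatP α β (ℓ - k) n * hhatP α β k n
      - ∑ k ∈ range ℓ, ghatP α β (ℓ - k) n * ghatP α β (k + 1) n := by
  rw [ghatP, ALPhist, if_neg (Nat.not_succ_le_self ℓ)]
  dsimp only
  congr 1 <;> apply sum_congr rfl <;> intro k hk <;> have := mem_range.mp hk
  · rw [ALPhist_of_le α β (Nat.sub_le ℓ k), ALPhist_of_le α β (m := k) (by omega)]; rfl
  · rw [ALPhist_of_le α β (Nat.sub_le ℓ k), ALPhist_of_le α β (m := k + 1) (by omega)]; rfl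

theorem fhatP_succ : fhatP α β (ℓ + 1) (n - 1)
    = fhatP α β ℓ n - α n * (ghatP α β (ℓ + 1) n + ghatP α β (ℓ + 1) (n - 1)) := by
  simp only [fhatP, ghatP, ALPhist, if_neg (Nat.not_succ_le_self ℓ), sub_add_cancel]

theorem hhatP_succ : hhatP α β (ℓ + 1) n
    = hhatP α β ℓ (n - 1) + β n * (ghatP α β (ℓ + 1) n + ghatP α β (ℓ + 1) (n - 1)) := by
  simp only [hhatP, ghatP, ALPhist, if_neg (Nat.not_succ_le_self ℓ)]

end Hat

theorem isHomogeneousALPlus_hat (α β : ℤ → ℂ) :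
    IsHomogeneousALPlus α β (fhatP α β) (ghatP α β) (hhatP α β) where
  f_zero n := by simp only [fhatP, ALPhist, sub_add_cancel]
  g_zero _ := rfl
  h_zero _ := rfl
  g_succ := ghatP_succ α β
  f_succ := fhatP_succ α β
  h_succ := hhatP_succ α β

theorem stmt0_general (α β : ℤ → ℂ) :
    ∀ (ℓ : ℕ) (n : ℤ),
      ghatP α β ℓ n - ghatP α β ℓ (n - 1)
        = α n * hhatP α β ℓ n + β n * fhatP α β ℓ (n - 1) :=
  (isHomogeneousALPlus_hat α β).g_sub

/-- For every `ℓ ∈ ℕ₀`, `g_{ℓ,+} − g_{ℓ,+}⁻ = α h_{ℓ,+} + β f_{ℓ,+}⁻` holds for the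
homogeneous Ablowitz–Ladik coefficients. -/
theorem stmt0 (α β : ℤ → ℂ)
    (hαβ : ∀ n : ℤ, α n * β n ≠ 0 ∧ α n * β n ≠ 1) :
    ∀ (ℓ : ℕ) (n : ℤ),
      ghatP α β ℓ n - ghatP α β ℓ (n - 1)
        = α n * hhatP α β ℓ n + β n * fhatP α β ℓ (n - 1) :=
  stmt0_general α β
end

section
/- Let φ₊, φ₋ : ℤ → ℂ be two sequences both satisfying the Riccati-type equation α φ φ⁻ − φ⁻ + z φ = z β (pointwise on ℤ) for fixed z ∈ ℂ \ {0} and sequences α, β : ℤ → ℂ, and suppose φ₊(n) ≠ φ₋(n) for all n. Define 𝔣 = 2/(φ₊ − φ₋), 𝔤 = (φ₊ + φ₋)/(φ₊ − φ₋), 𝔥 = 2φ₊φ₋/(φ₊ − φ₋). Then the following identities hold on ℤ: (i) z(𝔤⁻ − 𝔤) + zβ𝔣 + α𝔥⁻ = 0; (ii) zβ𝔣⁻ + α𝔥 − 𝔤 + 𝔤⁻ = 0; (iii) −𝔣 + z𝔣⁻ + α(𝔤 + 𝔤⁻) = 0; (iv) zβ(𝔤⁻ + 𝔤) − z𝔥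 + 𝔥⁻ = 0; (v) 𝔤² − 𝔣𝔥 = 1. -/
/-!
Each linear identity, multiplied by `(φ₊ − φ₋)(φ₊⁻ − φ₋⁻)/2`, is the difference of the Riccati
equations of `φ₊` and `φ₋` weighted by `(1, 1)`, `(φ₋, φ₊)`, `(φ₋⁻, φ₊⁻)` or `(φ₋φ₋⁻, φ₊φ₊⁻)`. The quadratic
identity is `(φ₊ + φ₋)² − 4φ₊φ₋ = (φ₊ − φ₋)²`.
-/

section RiccatiPair

variable {K : Type*} [Field K]

/-- The paper's `𝔣`, `𝔤`, `𝔥` at a site where `φ₊ = p` and `φ₋ = m`. -/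
def frakF (p m : K) : K := 2 / (p - m)

def frakG (p m : K) : K := (p + m) / (p - m)

def frakH (p m : K) : K := 2 * p * m / (p - m)

theorem frakG_sq_sub_frakF_mul_frakH {p m : K} (hpm : p ≠ m) :
    frakG p m ^ 2 - frakF p m * frakH p m = 1 := by
  have hd : p - m ≠ 0 := sub_ne_zero.mpr hpm
  simp only [frakF, frakG, frakH]
  field_simp
  ring

variable {a b z p m p' m' : K}
  (hp : a * p * p' - p' + z * p = z * b) (hm : a * m * m' - m' + z * m = z * b)
  (hpm : p ≠ m) (hpm' : p' ≠ m')
include hp hm hpm hpm'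

theorem mul_frakG_eq_of_riccati :
    z * frakG p m = z * frakG p' m' + z * b * frakF p m + a * frakH p' m' := by
  have hd : p - m ≠ 0 := sub_ne_zero.mpr hpm
  have hd' : p' - m' ≠ 0 := sub_ne_zero.mpr hpm'
  simp only [frakF, frakG, frakH]
  field_simp
  linear_combination -2 * m' * hp + 2 * p' * hm

theorem frakG_eq_of_riccati :
    frakG p m = frakG p' m' + z * b * frakF p' m' + a * frakH p m := by
  have hd : p - m ≠ 0 := sub_ne_zero.mpr hpm
  have hd' : p' - m' ≠ 0 := sub_ne_zero.mpr hpm'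
  simp only [frakF, frakG, frakH]
  field_simp
  linear_combination -2 * m * hp + 2 * p * hm

theorem frakF_eq_of_riccati :
    frakF p m = z * frakF p' m' + a * (frakG p m + frakG p' m') := by
  have hd : p - m ≠ 0 := sub_ne_zero.mpr hpm
  have hd' : p' - m' ≠ 0 := sub_ne_zero.mpr hpm'
  simp only [frakF, frakG]
  field_simp
  linear_combination -2 * hp + 2 * hm

theorem mul_frakH_eq_of_riccati :
    z * frakH p m = z * b * (frakG p' m' + frakG p m) + frakH p' m' := by
  have hd : p - m ≠ 0 := sub_ne_zero.mpr hpm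
  have hd' : p' - m' ≠ 0 := sub_ne_zero.mpr hpm'
  simp only [frakG, frakH]
  field_simp
  linear_combination -2 * m * m' * hp + 2 * p * p' * hm

end RiccatiPair

theorem stmt4_general (α β : ℤ → ℂ) (z : ℂ) (φp φm : ℤ → ℂ)
    (hp : ∀ n : ℤ, α n * φp n * φp (n - 1) - φp (n - 1) + z * φp n = z * β n)
    (hm : ∀ n : ℤ, α n * φm n * φm (n - 1) - φm (n - 1) + z * φm n = z * β n)
    (hne : ∀ n : ℤ, φp n ≠ φm n)
    (f g h : ℤ → ℂ)
    (hf : ∀ n, f n = 2 / (φp n - φm n))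
    (hg : ∀ n, g n = (φp n + φm n) / (φp n - φm n))
    (hh : ∀ n, h n = 2 * φp n * φm n / (φp n - φm n)) :
    ∀ n : ℤ,
      z * (g (n - 1) - g n) + z * β n * f n + α n * h (n - 1) = 0 ∧
      z * β n * f (n - 1) + α n * h n - g n + g (n - 1) = 0 ∧
      -f n + z * f (n - 1) + α n * (g n + g (n - 1)) = 0 ∧
      z * β n * (g (n - 1) + g n) - z * h n + h (n - 1) = 0 ∧
      (g n) ^ 2 - f n * h n = 1 := by
  obtain rfl : f = fun n ↦ frakF (φp n) (φm n) := funext hf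
  obtain rfl : g = fun n ↦ frakG (φp n) (φm n) := funext hg
  obtain rfl : h = fun n ↦ frakH (φp n) (φm n) := funext hh
  intro n
  have hpm := hne n
  have hpm' := hne (n - 1)
  refine ⟨?_, ?_, ?_, ?_, frakG_sq_sub_frakF_mul_frakH hpm⟩
  · linear_combination -mul_frakG_eq_of_riccati (hp n) (hm n) hpm hpm'
  · linear_combination -frakG_eq_of_riccati (hp n) (hm n) hpm hpm'
  · linear_combination -frakF_eq_of_riccati (hp n) (hm n) hpm hpm'
  · linear_combination -mul_frakH_eq_of_riccati (hp n) (hm n) hpm hpm'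

/-- If `φ₊`, `φ₋` both solve the Riccati-type equation
`α φ φ⁻ − φ⁻ + z φ = z β` and never coincide, then the quantities
`𝔣 = 2/(φ₊−φ₋)`, `𝔤 = (φ₊+φ₋)/(φ₊−φ₋)`, `𝔥 = 2φ₊φ₋/(φ₊−φ₋)` satisfy the
four linear identities and the quadratic identity `𝔤² − 𝔣𝔥 = 1`. -/
theorem stmt4 (α β : ℤ → ℂ) (z : ℂ) (hz : z ≠ 0) (φp φm : ℤ → ℂ)
    (hp : ∀ n : ℤ, α n * φp n * φp (n - 1) - φp (n - 1) + z * φp n = z * β n)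
    (hm : ∀ n : ℤ, α n * φm n * φm (n - 1) - φm (n - 1) + z * φm n = z * β n)
    (hne : ∀ n : ℤ, φp n ≠ φm n)
    (f g h : ℤ → ℂ)
    (hf : ∀ n, f n = 2 / (φp n - φm n))
    (hg : ∀ n, g n = (φp n + φm n) / (φp n - φm n))
    (hh : ∀ n, h n = 2 * φp n * φm n / (φp n - φm n)) :
    ∀ n : ℤ,
      z * (g (n - 1) - g n) + z * β n * f n + α n * h (n - 1) = 0 ∧
      z * β n * f (n - 1) + α n * h n - g n + g (n - 1) = 0 ∧
      -f n + z * f (n - 1) + α n * (g n + g (n - 1)) = 0 ∧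
      z * β n * (g (n - 1) + g n) - z * h n + h (n - 1) = 0 ∧
      (g n) ^ 2 - f n * h n = 1 :=
  stmt4_general α β z φp φm hp hm hne f g h hf hg hh
end

section
/- Let α, β : ℤ → ℂ with αβ never 0 or 1, set γ = 1 − αβ, and suppose φ has a formal power series expansion φ(z) = Σ_{j=0}^∞ φ_j^∞ z^{−j} (as a formal Laurent series in 1/z) satisfying the Riccati equation α φ φ⁻ − φ⁻ + zφ = zβ. Then the coefficients are determined by φ₀^∞ = β, φ₁^∞ = β⁻γ, and φ_{j+1}^∞ = (φ_j^∞)⁻ − α Σ_{ℓ=0}^{j} (φ_{j−ℓ}^∞)⁻ φ_ℓ^∞ for j ≥ 1. In particular φ₂^∞ = γ(−α(β⁻)² + β⁻⁻γ⁻). -/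
/-- The coefficients `φ j` of `φ(z) = Σ_j φ_j z^{-j}` make the coefficient of `z^{-j}` in
`α φ φ⁻ − φ⁻ + zφ − zβ` vanish for every `j ≥ 0`. -/
def IsRiccatiCoeffs (α : ℤ → ℂ) (φ : ℕ → ℤ → ℂ) : Prop :=
  ∀ (j : ℕ) (n : ℤ),
    α n * (∑ ℓ ∈ Finset.range (j + 1), φ ℓ n * φ (j - ℓ) (n - 1)) - φ j (n - 1) + φ (j + 1) n = 0

namespace IsRiccatiCoeffs

variable {α : ℤ → ℂ} {φ : ℕ → ℤ → ℂ}

theorem coeff_succ (h : IsRiccatiCoeffs α φ) (j : ℕ) (n : ℤ) :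
    φ (j + 1) n = φ j (n - 1) - α n * ∑ ℓ ∈ Finset.range (j + 1), φ (j - ℓ) (n - 1) * φ ℓ n := by
  simp only [mul_comm (φ (j - _) (n - 1))]
  linear_combination h j n

variable {β : ℤ → ℂ}

theorem coeff_one (h : IsRiccatiCoeffs α φ) (h₀ : ∀ n, φ 0 n = β n) (n : ℤ) :
    φ 1 n = β (n - 1) * (1 - α n * β n) := by
  rw [h.coeff_succ 0, Finset.sum_range_one, h₀, h₀]
  ring

theorem coeff_two (h : IsRiccatiCoeffs α φ) (h₀ : ∀ n, φ 0 n = β n) (n : ℤ) :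
    φ 2 n = (1 - α n * β n) * (-α n * β (n - 1) ^ 2 + β (n - 2) * (1 - α (n - 1) * β (n - 1))) := by
  rw [h.coeff_succ 1, Finset.sum_range_succ, Finset.sum_range_one, Nat.sub_self, Nat.sub_zero,
    h.coeff_one h₀, h.coeff_one h₀, h₀, h₀, show n - 1 - 1 = n - 2 by ring]
  ring

end IsRiccatiCoeffs

theorem stmt5_general (α β : ℤ → ℂ)
    (φ : ℕ → ℤ → ℂ)
    (htop : ∀ n : ℤ, φ 0 n = β n)
    (hric : ∀ (j : ℕ) (n : ℤ),
      α n * (∑ ℓ ∈ Finset.range (j + 1), φ ℓ n * φ (j - ℓ) (n - 1))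
        - φ j (n - 1) + φ (j + 1) n = 0) :
    (∀ n : ℤ, φ 0 n = β n) ∧
    (∀ n : ℤ, φ 1 n = β (n - 1) * (1 - α n * β n)) ∧
    (∀ j : ℕ, 1 ≤ j → ∀ n : ℤ,
      φ (j + 1) n = φ j (n - 1)
        - α n * ∑ ℓ ∈ Finset.range (j + 1), φ (j - ℓ) (n - 1) * φ ℓ n) ∧
    (∀ n : ℤ, φ 2 n = (1 - α n * β n)
        * (-α n * (β (n - 1)) ^ 2 + β (n - 2) * (1 - α (n - 1) * β (n - 1)))) := by
  have h : IsRiccatiCoeffs α φ := hric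
  exact ⟨htop, h.coeff_one htop, fun j _ => h.coeff_succ j, h.coeff_two htop⟩

/-- Coefficients of the formal expansion `φ(z) = Σ_{j≥0} φ_j^∞ z^{−j}` of a solution of
the Riccati equation `α φ φ⁻ − φ⁻ + zφ = zβ` around `1/z = 0`.  The Riccati equation is
imposed coefficientwise: the `z¹` coefficient gives `φ₀ = β`, and the `z^{−j}` coefficient
(`j ≥ 0`) gives `α Σ_{ℓ=0}^{j} φ_ℓ (φ_{j−ℓ})⁻ − (φ_j)⁻ + φ_{j+1} = 0`.  Then
`φ₀^∞ = β`, `φ₁^∞ = β⁻γ`, the coefficients satisfy the stated recursion for `j ≥ 1`,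
and in particular `φ₂^∞ = γ(−α(β⁻)² + β⁻⁻γ⁻)`, where `γ = 1 − αβ`. -/
theorem stmt5 (α β : ℤ → ℂ)
    (hαβ : ∀ n : ℤ, α n * β n ≠ 0 ∧ α n * β n ≠ 1)
    (φ : ℕ → ℤ → ℂ)
    (htop : ∀ n : ℤ, φ 0 n = β n)
    (hric : ∀ (j : ℕ) (n : ℤ),
      α n * (∑ ℓ ∈ Finset.range (j + 1), φ ℓ n * φ (j - ℓ) (n - 1))
        - φ j (n - 1) + φ (j + 1) n = 0) :
    (∀ n : ℤ, φ 0 n = β n) ∧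
    (∀ n : ℤ, φ 1 n = β (n - 1) * (1 - α n * β n)) ∧
    (∀ j : ℕ, 1 ≤ j → ∀ n : ℤ,
      φ (j + 1) n = φ j (n - 1)
        - α n * ∑ ℓ ∈ Finset.range (j + 1), φ (j - ℓ) (n - 1) * φ ℓ n) ∧
    (∀ n : ℤ, φ 2 n = (1 - α n * β n)
        * (-α n * (β (n - 1)) ^ 2 + β (n - 2) * (1 - α (n - 1) * β (n - 1)))) :=
  stmt5_general α β φ htop hric
end

section
/- Let α, β : ℤ → ℂ with α nowhere zero, set γ = 1 − αβ, and suppose φ has a formal expansion φ(z) = Σ_{j=−1}^∞ φ_j^∞ z^{−j} with leading coefficient φ_{−1}^∞ ≠ 0 satisfying the Riccati equation α φ φ⁻ − φ⁻ + zφ = zβ coefficientwise. Then φ_{−1}^∞ = −1/α⁺, φ₀^∞ = (α⁺⁺/(α⁺)²)γ⁺, and φ_{j+1}^∞ = −(α⁺⁺/α⁺) φ_j^∞ + α⁺⁺ Σ_{ℓ=0}^{j} φ_{j−ℓ}^∞ (φ_ℓ^∞)⁺ for j ≥ 0. -/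
/-!
Comparing coefficients turns the Riccati equation into a triangular system. The top
coefficient gives `α⁺ ψ₀ = -1`, i.e. the leading coefficient `-1/α⁺`. At every lower order
the unknown coefficient appears twice, as `ψ_j` and as `ψ_j⁻`; the contribution
`α ψ_j ψ₀⁻ = -ψ_j` of the second cancels the lone `ψ_j`, so each equation, shifted by one,
is linear in `ψ_j` with coefficient `α⁺ ψ₀⁺ = -α⁺/α⁺⁺`.
-/

open Finset

theorem sum_range_add_three_sub {M : Type*} [AddCommMonoid M] (f : ℕ → ℕ → M) (j : ℕ) :
    ∑ ℓ ∈ range (j + 3), f ℓ (j + 2 - ℓ)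
      = f 0 (j + 2) + f (j + 2) 0 + ∑ ℓ ∈ range (j + 1), f (ℓ + 1) (j + 1 - ℓ) := by
  rw [sum_range_succ, sum_range_succ', Nat.sub_self, Nat.sub_zero,
    sum_congr rfl fun ℓ _ => by rw [Nat.add_sub_add_right (j + 1) 1 ℓ]]
  abel

theorem left_ne_zero_of_mul_eq_neg_one {R : Type*} [Ring R] [Nontrivial R] {a b : R}
    (h : a * b = -1) : a ≠ 0 :=
  left_ne_zero_of_mul (h ▸ neg_ne_zero.mpr one_ne_zero)

section Field

variable {K : Type*} [Field K]

theorem eq_of_riccati_first_order {u v p q x y b : K} (hp : u * p = -1) (hq : v * q = -1)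
    (h : u * (q * x + y * p) - p + y = b) : x = v / u ^ 2 * (1 - u * b) := by
  have hu : u ≠ 0 := left_ne_zero_of_mul_eq_neg_one hp
  field_simp
  linear_combination (-u * v) * h + (u ^ 2 * x) * hq + v * (u * y - 1) * hp

theorem eq_of_riccati_higher_order {u v p q x y r s : K} (hp : u * p = -1) (hq : v * q = -1)
    (h : u * (q * x + y * p + s) - r + y = 0) : x = -(v / u) * r + v * s := by
  have hu : u ≠ 0 := left_ne_zero_of_mul_eq_neg_one hp
  field_simp
  linear_combination (-v) * h + (u * x) * hq + v * y * hp

end Field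

section Riccati

variable {α β : ℤ → ℂ} {ψ : ℕ → ℤ → ℂ}

theorem alpha_succ_mul_lead_eq_neg_one (hlead : ∀ n : ℤ, ψ 0 n ≠ 0)
    (h2 : ∀ n : ℤ, α n * ψ 0 n * ψ 0 (n - 1) + ψ 0 n = 0) (n : ℤ) :
    α (n + 1) * ψ 0 n = -1 := by
  have h := h2 (n + 1)
  rw [add_sub_cancel_right] at h
  exact mul_left_cancel₀ (hlead (n + 1)) (by linear_combination h)

theorem alpha_add_two_mul_lead_succ_eq_neg_one (hlead : ∀ n : ℤ, ψ 0 n ≠ 0)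
    (h2 : ∀ n : ℤ, α n * ψ 0 n * ψ 0 (n - 1) + ψ 0 n = 0) (n : ℤ) :
    α (n + 2) * ψ 0 (n + 1) = -1 := by
  rw [← one_add_one_eq_two, ← add_assoc]
  exact alpha_succ_mul_lead_eq_neg_one hlead h2 (n + 1)

theorem lead_eq (hlead : ∀ n : ℤ, ψ 0 n ≠ 0)
    (h2 : ∀ n : ℤ, α n * ψ 0 n * ψ 0 (n - 1) + ψ 0 n = 0) (n : ℤ) :
    ψ 0 n = -1 / α (n + 1) := by
  have h := alpha_succ_mul_lead_eq_neg_one hlead h2 n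
  exact eq_div_of_mul_eq (left_ne_zero_of_mul_eq_neg_one h) (by rw [mul_comm, h])

theorem coeff_one_eq (hlead : ∀ n : ℤ, ψ 0 n ≠ 0)
    (h2 : ∀ n : ℤ, α n * ψ 0 n * ψ 0 (n - 1) + ψ 0 n = 0)
    (h1 : ∀ n : ℤ,
      α n * (ψ 0 n * ψ 1 (n - 1) + ψ 1 n * ψ 0 (n - 1)) - ψ 0 (n - 1) + ψ 1 n = β n)
    (n : ℤ) :
    ψ 1 n = α (n + 2) / (α (n + 1)) ^ 2 * (1 - α (n + 1) * β (n + 1)) := by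
  have h := h1 (n + 1)
  rw [add_sub_cancel_right] at h
  exact eq_of_riccati_first_order (alpha_succ_mul_lead_eq_neg_one hlead h2 n)
    (alpha_add_two_mul_lead_succ_eq_neg_one hlead h2 n) h

theorem coeff_add_two_eq (hlead : ∀ n : ℤ, ψ 0 n ≠ 0)
    (h2 : ∀ n : ℤ, α n * ψ 0 n * ψ 0 (n - 1) + ψ 0 n = 0)
    (hric : ∀ j : ℕ, 2 ≤ j → ∀ n : ℤ,
      α n * (∑ ℓ ∈ Finset.range (j + 1), ψ ℓ n * ψ (j - ℓ) (n - 1))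
        - ψ (j - 1) (n - 1) + ψ j n = 0)
    (j : ℕ) (n : ℤ) :
    ψ (j + 2) n = -(α (n + 2) / α (n + 1)) * ψ (j + 1) n
      + α (n + 2) * ∑ ℓ ∈ Finset.range (j + 1), ψ (j + 1 - ℓ) n * ψ (ℓ + 1) (n + 1) := by
  have h := hric (j + 2) (by omega) (n + 1)
  rw [add_sub_cancel_right, sum_range_add_three_sub (fun a b => ψ a (n + 1) * ψ b n)] at h
  simp_rw [mul_comm (ψ (j + 1 - _) n)]
  exact eq_of_riccati_higher_order (alpha_succ_mul_lead_eq_neg_one hlead h2 n)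
    (alpha_add_two_mul_lead_succ_eq_neg_one hlead h2 n) h

end Riccati

theorem stmt6_general (α β : ℤ → ℂ)
    (ψ : ℕ → ℤ → ℂ) (hlead : ∀ n : ℤ, ψ 0 n ≠ 0)
    (h2 : ∀ n : ℤ, α n * ψ 0 n * ψ 0 (n - 1) + ψ 0 n = 0)
    (h1 : ∀ n : ℤ,
      α n * (ψ 0 n * ψ 1 (n - 1) + ψ 1 n * ψ 0 (n - 1)) - ψ 0 (n - 1) + ψ 1 n = β n)
    (hric : ∀ j : ℕ, 2 ≤ j → ∀ n : ℤ,
      α n * (∑ ℓ ∈ Finset.range (j + 1), ψ ℓ n * ψ (j - ℓ) (n - 1))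
        - ψ (j - 1) (n - 1) + ψ j n = 0) :
    (∀ n : ℤ, ψ 0 n = -1 / α (n + 1)) ∧
    (∀ n : ℤ, ψ 1 n = α (n + 2) / (α (n + 1)) ^ 2 * (1 - α (n + 1) * β (n + 1))) ∧
    (∀ (j : ℕ) (n : ℤ),
      ψ (j + 2) n = -(α (n + 2) / α (n + 1)) * ψ (j + 1) n
        + α (n + 2) * ∑ ℓ ∈ Finset.range (j + 1), ψ (j + 1 - ℓ) n * ψ (ℓ + 1) (n + 1)) :=
  ⟨lead_eq hlead h2, coeff_one_eq hlead h2 h1, coeff_add_two_eq hlead h2 hric⟩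

/-- Coefficients of the formal expansion `φ(z) = Σ_{j≥−1} φ_j^∞ z^{−j}` of a solution of
the Riccati equation `α φ φ⁻ − φ⁻ + zφ = zβ` around `1/z = 0`, with a nonvanishing
leading `z¹` term.  Here `ψ j` denotes `φ_{j−1}^∞`, so `φ(z) = Σ_{j≥0} ψ_j z^{1−j}`.
The Riccati equation coefficientwise reads: at `z²`, `α ψ₀ ψ₀⁻ + ψ₀ = 0`; at `z¹`,
`α(ψ₀ψ₁⁻ + ψ₁ψ₀⁻) − ψ₀⁻ + ψ₁ = β`; at `z^{2−j}` (`j ≥ 2`),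
`α Σ_{ℓ=0}^{j} ψ_ℓ ψ_{j−ℓ}⁻ − ψ_{j−1}⁻ + ψ_j = 0`.  Then `φ_{−1}^∞ = −1/α⁺`,
`φ₀^∞ = (α⁺⁺/(α⁺)²)γ⁺`, and
`φ_{j+1}^∞ = −(α⁺⁺/α⁺) φ_j^∞ + α⁺⁺ Σ_{ℓ=0}^{j} φ_{j−ℓ}^∞ (φ_ℓ^∞)⁺` for `j ≥ 0`,
where `γ = 1 − αβ`. -/
theorem stmt6 (α β : ℤ → ℂ) (hα : ∀ n : ℤ, α n ≠ 0)
    (ψ : ℕ → ℤ → ℂ) (hlead : ∀ n : ℤ, ψ 0 n ≠ 0)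
    (h2 : ∀ n : ℤ, α n * ψ 0 n * ψ 0 (n - 1) + ψ 0 n = 0)
    (h1 : ∀ n : ℤ,
      α n * (ψ 0 n * ψ 1 (n - 1) + ψ 1 n * ψ 0 (n - 1)) - ψ 0 (n - 1) + ψ 1 n = β n)
    (hric : ∀ j : ℕ, 2 ≤ j → ∀ n : ℤ,
      α n * (∑ ℓ ∈ Finset.range (j + 1), ψ ℓ n * ψ (j - ℓ) (n - 1))
        - ψ (j - 1) (n - 1) + ψ j n = 0) :
    (∀ n : ℤ, ψ 0 n = -1 / α (n + 1)) ∧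
    (∀ n : ℤ, ψ 1 n = α (n + 2) / (α (n + 1)) ^ 2 * (1 - α (n + 1) * β (n + 1))) ∧
    (∀ (j : ℕ) (n : ℤ),
      ψ (j + 2) n = -(α (n + 2) / α (n + 1)) * ψ (j + 1) n
        + α (n + 2) * ∑ ℓ ∈ Finset.range (j + 1), ψ (j + 1 - ℓ) n * ψ (ℓ + 1) (n + 1)) :=
  stmt6_general α β ψ hlead h2 h1 hric
end

section
/- Let α, β : ℤ → ℂ with ρ² = 1 − αβ for a choice of sequence ρ : ℤ → ℂ. Define difference expressions D = ρ δ_even S⁻ − α⁺ δ_odd + β δ_even + ρ⁺ δ_odd S⁺ and E = ρ δ_odd S⁻ + β δ_odd − α⁺ δ_even + ρ⁺ δ_even S⁺, and similarly D' = ρ δ_even S⁻ − β⁺ δ_odd + α δ_even + ρ⁺ δ_odd S⁺ and E' = ρ δ_odd S⁻ + α δ_odd − β⁺ δ_even + ρ⁺ δ_even S⁺. Then D'D = DD' = I and E'E = EE' = I as operators on sequences ℤ → ℂ, i.e., D' = D⁻¹ and E' = E⁻¹. -/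
/-- Indicator of the even integers. -/
def deltaEven (n : ℤ) : ℂ := if Even n then 1 else 0
/-- Indicator of the odd integers. -/
def deltaOdd (n : ℤ) : ℂ := 1 - deltaEven n

/-- The difference expression `D = ρ δ_even S⁻ − α⁺ δ_odd + β δ_even + ρ⁺ δ_odd S⁺`. -/
noncomputable def Dop (α β ρ : ℤ → ℂ) (f : ℤ → ℂ) : ℤ → ℂ := fun n =>
  ρ n * deltaEven n * f (n - 1)
    + (-α (n + 1) * deltaOdd n + β n * deltaEven n) * f n
    + ρ (n + 1) * deltaOdd n * f (n + 1)

/-- The difference expression `E = ρ δ_odd S⁻ + β δ_odd − α⁺ δ_even + ρ⁺ δ_even S⁺`. -/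
noncomputable def Eop (α β ρ : ℤ → ℂ) (f : ℤ → ℂ) : ℤ → ℂ := fun n =>
  ρ n * deltaOdd n * f (n - 1)
    + (β n * deltaOdd n - α (n + 1) * deltaEven n) * f n
    + ρ (n + 1) * deltaEven n * f (n + 1)

/-- The difference expression `D' = ρ δ_even S⁻ − β⁺ δ_odd + α δ_even + ρ⁺ δ_odd S⁺`. -/
noncomputable def Dop' (α β ρ : ℤ → ℂ) (f : ℤ → ℂ) : ℤ → ℂ := fun n =>
  ρ n * deltaEven n * f (n - 1)
    + (-β (n + 1) * deltaOdd n + α n * deltaEven n) * f n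
    + ρ (n + 1) * deltaOdd n * f (n + 1)

/-- The difference expression `E' = ρ δ_odd S⁻ + α δ_odd − β⁺ δ_even + ρ⁺ δ_even S⁺`. -/
noncomputable def Eop' (α β ρ : ℤ → ℂ) (f : ℤ → ℂ) : ℤ → ℂ := fun n =>
  ρ n * deltaOdd n * f (n - 1)
    + (α n * deltaOdd n - β (n + 1) * deltaEven n) * f n
    + ρ (n + 1) * deltaEven n * f (n + 1)

/-!
On sequences, `D` is block diagonal with the `2 × 2` blocks
`[[-α, ρ], [ρ, β]]` (evaluated at `2k`) acting on the coordinates `(2k - 1, 2k)`,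
and `D'` has the blocks `[[-β, ρ], [ρ, α]]`; their product is `(ρ² + αβ) • I = I`.
The expression `E` is `D` for the opposite pairing `(2k, 2k + 1)`: conjugating by the
shift `n ↦ n - 1` turns `E` into `D` with shifted coefficients.
-/

section

variable {α β ρ : ℤ → ℂ}

lemma deltaEven_add_one (n : ℤ) : deltaEven (n + 1) = deltaOdd n := by
  by_cases h : Even n <;> simp [deltaOdd, deltaEven, h]

lemma deltaOdd_add_one (n : ℤ) : deltaOdd (n + 1) = deltaEven n := by
  rw [deltaOdd, deltaEven_add_one, deltaOdd, sub_sub_cancel]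

lemma Dop_apply_of_even (f : ℤ → ℂ) {n : ℤ} (hn : Even n) :
    Dop α β ρ f n = ρ n * f (n - 1) + β n * f n := by
  simp [Dop, deltaOdd, deltaEven, hn]

lemma Dop_apply_of_odd (f : ℤ → ℂ) {n : ℤ} (hn : Odd n) :
    Dop α β ρ f n = -α (n + 1) * f n + ρ (n + 1) * f (n + 1) := by
  simp [Dop, deltaOdd, deltaEven, Int.not_even_iff_odd.2 hn]

lemma Dop'_eq_Dop_swap : Dop' α β ρ = Dop β α ρ := rfl

lemma Eop'_eq_Eop_swap : Eop' α β ρ = Eop β α ρ := rfl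

lemma Eop_apply_sub_one (f : ℤ → ℂ) (n : ℤ) :
    Eop α β ρ f (n - 1) =
      Dop (fun m => α (m - 1)) (fun m => β (m - 1)) (fun m => ρ (m - 1))
        (fun m => f (m - 1)) n := by
  have hn : n = n - 1 + 1 := (sub_add_cancel n 1).symm
  rw [hn]
  simp only [Dop, Eop, deltaEven_add_one, deltaOdd_add_one, add_sub_cancel_right]
  ring

lemma Dop_swap_Dop (hρ : ∀ n, ρ n ^ 2 = 1 - α n * β n) (f : ℤ → ℂ) :
    Dop β α ρ (Dop α β ρ f) = f := by
  funext n
  rcases Int.even_or_odd n with hn | hn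
  · have hprev : Odd (n - 1) := hn.sub_odd odd_one
    rw [Dop_apply_of_even _ hn, Dop_apply_of_even _ hn, Dop_apply_of_odd _ hprev,
      sub_add_cancel]
    linear_combination f n * hρ n
  · have hnext : Even (n + 1) := hn.add_one
    rw [Dop_apply_of_odd _ hn, Dop_apply_of_odd _ hn, Dop_apply_of_even _ hnext,
      add_sub_cancel_right]
    linear_combination f n * hρ (n + 1)

lemma Eop_swap_Eop (hρ : ∀ n, ρ n ^ 2 = 1 - α n * β n) (f : ℤ → ℂ) :
    Eop β α ρ (Eop α β ρ f) = f := by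
  funext n
  calc Eop β α ρ (Eop α β ρ f) n = Eop β α ρ (Eop α β ρ f) (n + 1 - 1) := by
        rw [add_sub_cancel_right]
    _ = Dop (fun m => β (m - 1)) (fun m => α (m - 1)) (fun m => ρ (m - 1))
          (Dop (fun m => α (m - 1)) (fun m => β (m - 1)) (fun m => ρ (m - 1))
            (fun m => f (m - 1))) (n + 1) := by
        simp only [Eop_apply_sub_one]
    _ = f n := by
        rw [Dop_swap_Dop (fun m => hρ (m - 1)), add_sub_cancel_right]

end

/-- If `ρ² = 1 − αβ`, then `D'D = DD' = I` and `E'E = EE' = I` on sequences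
`ℤ → ℂ`, i.e. `D' = D⁻¹` and `E' = E⁻¹`. -/
theorem stmt10 (α β ρ : ℤ → ℂ) (hρ : ∀ n : ℤ, ρ n ^ 2 = 1 - α n * β n) :
    ∀ (f : ℤ → ℂ) (n : ℤ),
      Dop' α β ρ (Dop α β ρ f) n = f n ∧
      Dop α β ρ (Dop' α β ρ f) n = f n ∧
      Eop' α β ρ (Eop α β ρ f) n = f n ∧
      Eop α β ρ (Eop' α β ρ f) n = f n := by
  have hρ' : ∀ n, ρ n ^ 2 = 1 - β n * α n := fun n => by rw [hρ, mul_comm]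
  intro f n
  simp only [Dop'_eq_Dop_swap, Eop'_eq_Eop_swap, Dop_swap_Dop hρ, Dop_swap_Dop hρ',
    Eop_swap_Eop hρ, Eop_swap_Eop hρ', and_self]
end

section
/- Let α, β, ρ : ℤ → ℂ with ρ² = 1 − αβ, and let D, E be the difference expressions D = ρ δ_even S⁻ − α⁺ δ_odd + β δ_even + ρ⁺ δ_odd S⁺ and E = ρ δ_odd S⁻ + β δ_odd − α⁺ δ_even + ρ⁺ δ_even S⁺. Then the composition L = DE is the five-diagonal difference expression L = ρ⁻ρ δ_even S⁻⁻ + (β⁻ρ δ_even − α⁺ρ δ_odd) S⁻ − βα⁺ + (βρ⁺ δ_even − α⁺⁺ρ⁺ δ_odd) S⁺ + ρ⁺ρ⁺⁺ δ_odd S⁺⁺. -/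
/-- The five-diagonal Ablowitz–Ladik Lax difference expression
`L = ρ⁻ρ δ_even S⁻⁻ + (β⁻ρ δ_even − α⁺ρ δ_odd) S⁻ − βα⁺
     + (βρ⁺ δ_even − α⁺⁺ρ⁺ δ_odd) S⁺ + ρ⁺ρ⁺⁺ δ_odd S⁺⁺`. -/
noncomputable def Lop (α β ρ : ℤ → ℂ) (f : ℤ → ℂ) : ℤ → ℂ := fun n =>
  ρ (n - 1) * ρ n * deltaEven n * f (n - 2)
    + (β (n - 1) * ρ n * deltaEven n - α (n + 1) * ρ n * deltaOdd n) * f (n - 1)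
    - β n * α (n + 1) * f n
    + (β n * ρ (n + 1) * deltaEven n - α (n + 2) * ρ (n + 1) * deltaOdd n) * f (n + 1)
    + ρ (n + 1) * ρ (n + 2) * deltaOdd n * f (n + 2)

/-!
On each parity class every operator collapses to a two- or three-term expression: at even `n`,
`D` reads `ρ S⁻ + β` and `E` reads `−α⁺ + ρ⁺ S⁺`; at odd `n` the roles are swapped. Since `n ± 1`
has the opposite parity to `n`, composing the collapsed forms gives the collapsed form of `L`
by a ring identity.
-/

section Parity

variable {n : ℤ}

theorem deltaEven_of_even (h : Even n) : deltaEven n = 1 := if_pos h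

theorem deltaEven_of_odd (h : Odd n) : deltaEven n = 0 := if_neg (Int.not_even_iff_odd.mpr h)

theorem deltaOdd_of_even (h : Even n) : deltaOdd n = 0 := by
  rw [deltaOdd, deltaEven_of_even h, sub_self]

theorem deltaOdd_of_odd (h : Odd n) : deltaOdd n = 1 := by
  rw [deltaOdd, deltaEven_of_odd h, sub_zero]

variable (α β ρ f : ℤ → ℂ)

theorem Dop_of_even (h : Even n) : Dop α β ρ f n = ρ n * f (n - 1) + β n * f n := by
  simp only [Dop, deltaEven_of_even h, deltaOdd_of_even h]
  ring

theorem Dop_of_odd (h : Odd n) : Dop α β ρ f n = -α (n + 1) * f n + ρ (n + 1) * f (n + 1) := by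
  simp only [Dop, deltaEven_of_odd h, deltaOdd_of_odd h]
  ring

theorem Eop_of_even (h : Even n) : Eop α β ρ f n = -α (n + 1) * f n + ρ (n + 1) * f (n + 1) := by
  simp only [Eop, deltaEven_of_even h, deltaOdd_of_even h]
  ring

theorem Eop_of_odd (h : Odd n) : Eop α β ρ f n = ρ n * f (n - 1) + β n * f n := by
  simp only [Eop, deltaEven_of_odd h, deltaOdd_of_odd h]
  ring

theorem Lop_of_even (h : Even n) :
    Lop α β ρ f n = ρ (n - 1) * ρ n * f (n - 2) + β (n - 1) * ρ n * f (n - 1)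
      - β n * α (n + 1) * f n + β n * ρ (n + 1) * f (n + 1) := by
  simp only [Lop, deltaEven_of_even h, deltaOdd_of_even h]
  ring

theorem Lop_of_odd (h : Odd n) :
    Lop α β ρ f n = -α (n + 1) * ρ n * f (n - 1) - β n * α (n + 1) * f n
      - α (n + 2) * ρ (n + 1) * f (n + 1) + ρ (n + 1) * ρ (n + 2) * f (n + 2) := by
  simp only [Lop, deltaEven_of_odd h, deltaOdd_of_odd h]
  ring

end Parity

theorem stmt11_general (α β ρ : ℤ → ℂ) :
    ∀ (f : ℤ → ℂ) (n : ℤ), Dop α β ρ (Eop α β ρ f) n = Lop α β ρ f n := by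
  intro f n
  rcases Int.even_or_odd n with h | h
  · rw [Dop_of_even _ _ _ _ h, Lop_of_even _ _ _ _ h, Eop_of_even _ _ _ _ h,
      Eop_of_odd _ _ _ _ (h.sub_odd odd_one),
      show n - 1 - 1 = n - 2 by ring]
    ring
  · rw [Dop_of_odd _ _ _ _ h, Lop_of_odd _ _ _ _ h, Eop_of_odd _ _ _ _ h,
      Eop_of_even _ _ _ _ h.add_one,
      show n + 1 + 1 = n + 2 by ring]
    ring

/-- If `ρ² = 1 − αβ`, then the composition `DE` equals the five-diagonal difference
expression `L`. -/
theorem stmt11 (α β ρ : ℤ → ℂ) (hρ : ∀ n : ℤ, ρ n ^ 2 = 1 - α n * β n) :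
    ∀ (f : ℤ → ℂ) (n : ℤ), Dop α β ρ (Eop α β ρ f) n = Lop α β ρ f n :=
  stmt11_general α β ρ
end

section
/- Let α, β : ℤ × ℝ → ℂ be differentiable in t and satisfy the first Ablowitz–Ladik equation −i α_t − (1 − αβ)(α⁻ + α⁺) + 2α = 0 and −i β_t + (1 − αβ)(β⁻ + β⁺) − 2β = 0, with α(·,t), β(·,t) ∈ ℓ¹(ℤ) for all t and the sums differentiable term by term. Then d/dt Σ_{n∈ℤ} α(n+1,t)β(n,t) = 0 and d/dt Σ_{n∈ℤ} α(n,t)β(n+1,t) = 0. -/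
set_option maxHeartbeats 1000000

private lemma AL_tele (G : ℤ → ℂ) (h : Summable G) : ∑' n : ℤ, (G n - G (n+1)) = 0 := by
  have h' : Summable (fun n : ℤ => G (n+1)) :=
    ((Equiv.addRight (1:ℤ)).summable_iff).mpr h
  have he := (Equiv.addRight (1:ℤ)).tsum_eq G
  simp only [Equiv.coe_addRight] at he
  rw [Summable.tsum_sub h h', he, sub_self]

private lemma AL_smul_bdd (a c : ℤ → ℂ) (ha : Summable fun n => ‖a n‖) (C : ℝ)
    (hc : ∀ n, ‖c n‖ ≤ C) : Summable fun n => a n * c n := by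
  apply Summable.of_norm
  apply Summable.of_nonneg_of_le (fun n => norm_nonneg _) (fun n => ?_) (ha.mul_right C)
  rw [norm_mul]
  exact mul_le_mul_of_nonneg_left (hc n) (norm_nonneg _)

/-- If `α, β` solve the first Ablowitz–Ladik equation
`−iα_t − (1−αβ)(α⁻ + α⁺) + 2α = 0`, `−iβ_t + (1−αβ)(β⁻ + β⁺) − 2β = 0`,
are `ℓ¹` in `n` for each `t`, and the lattice sums may be differentiated term by
term, then `Σ_n α(n+1,t)β(n,t)` and `Σ_n α(n,t)β(n+1,t)` are time-independent. -/
theorem stmt12 (α β α' β' : ℝ → ℤ → ℂ)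
    (hα : ∀ (t : ℝ) (n : ℤ), HasDerivAt (fun s => α s n) (α' t n) t)
    (hβ : ∀ (t : ℝ) (n : ℤ), HasDerivAt (fun s => β s n) (β' t n) t)
    (hAL1 : ∀ (t : ℝ) (n : ℤ),
      -Complex.I * α' t n
        - (1 - α t n * β t n) * (α t (n - 1) + α t (n + 1)) + 2 * α t n = 0)
    (hAL2 : ∀ (t : ℝ) (n : ℤ),
      -Complex.I * β' t n
        + (1 - α t n * β t n) * (β t (n - 1) + β t (n + 1)) - 2 * β t n = 0)
    (hsum : ∀ t : ℝ, Summable (fun n : ℤ => ‖α t n‖) ∧ Summable (fun n : ℤ => ‖β t n‖))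
    -- term-by-term differentiation of the lattice sums
    (hterm1 : ∀ t : ℝ,
      HasDerivAt (fun s => ∑' n : ℤ, α s (n + 1) * β s n)
        (∑' n : ℤ, (α' t (n + 1) * β t n + α t (n + 1) * β' t n)) t)
    (hterm2 : ∀ t : ℝ,
      HasDerivAt (fun s => ∑' n : ℤ, α s n * β s (n + 1))
        (∑' n : ℤ, (α' t n * β t (n + 1) + α t n * β' t (n + 1))) t) :
    ∀ t : ℝ,
      HasDerivAt (fun s => ∑' n : ℤ, α s (n + 1) * β s n) 0 t ∧
      HasDerivAt (fun s => ∑' n : ℤ, α s n * β s (n + 1)) 0 t := by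
  intro t
  obtain ⟨hA, hB⟩ := hsum t
  set A := ∑' n : ℤ, ‖α t n‖ with hAdef
  set B := ∑' n : ℤ, ‖β t n‖ with hBdef
  have hAb : ∀ n, ‖α t n‖ ≤ A := fun n => Summable.le_tsum hA n (fun _ _ => norm_nonneg _)
  have hBb : ∀ n, ‖β t n‖ ≤ B := fun n => Summable.le_tsum hB n (fun _ _ => norm_nonneg _)
  have hA0 : (0:ℝ) ≤ A := (norm_nonneg _).trans (hAb 0)
  have hB0 : (0:ℝ) ≤ B := (norm_nonneg _).trans (hBb 0)
  have hAshift : Summable (fun n : ℤ => ‖α t (n+1)‖) :=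
    ((Equiv.addRight (1:ℤ)).summable_iff).mpr hA
  have hAshift' : Summable (fun n : ℤ => ‖α t (n-1)‖) :=
    ((Equiv.subRight (1:ℤ)).summable_iff).mpr hA
  -- F1
  set F1 : ℤ → ℂ := fun n =>
    α t n * β t n - (1 - α t n * β t n) * (α t (n+1) * β t (n-1)) with hF1def
  have hsF1 : Summable F1 := by
    have s1 : Summable (fun n : ℤ => α t n * β t n) :=
      AL_smul_bdd (α t) (β t) hA B hBb
    have s2 : Summable (fun n : ℤ => α t (n+1) * ((α t n * β t n - 1) * β t (n-1))) := by
      apply AL_smul_bdd _ _ hAshift ((A*B+1)*B)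
      intro n
      calc ‖(α t n * β t n - 1) * β t (n-1)‖
          ≤ (‖α t n‖ * ‖β t n‖ + 1) * ‖β t (n-1)‖ := by
            rw [norm_mul]
            gcongr
            exact (norm_sub_le _ _).trans (by rw [norm_mul, norm_one])
        _ ≤ (A*B+1)*B := by
            have := hAb n; have := hBb n; have := hBb (n-1)
            gcongr <;> positivity
    exact (s1.add s2).congr (fun n => by simp only [hF1def]; ring)
  -- F2
  set F2 : ℤ → ℂ := fun n =>
    (1 - α t n * β t n) * (α t (n-1) * β t (n+1)) - α t n * β t n with hF2def
  have hsF2 : Summable F2 := by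
    have s1 : Summable (fun n : ℤ => α t (n-1) * ((1 - α t n * β t n) * β t (n+1))) := by
      apply AL_smul_bdd _ _ hAshift' ((1+A*B)*B)
      intro n
      calc ‖(1 - α t n * β t n) * β t (n+1)‖
          ≤ (1 + ‖α t n‖ * ‖β t n‖) * ‖β t (n+1)‖ := by
            rw [norm_mul]
            gcongr
            exact (norm_sub_le _ _).trans (by rw [norm_mul, norm_one])
        _ ≤ (1+A*B)*B := by
            have := hAb n; have := hBb n; have := hBb (n+1)
            gcongr <;> positivity
    have s2 : Summable (fun n : ℤ => α t n * β t n) :=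
      AL_smul_bdd (α t) (β t) hA B hBb
    exact (s1.sub s2).congr (fun n => by simp only [hF2def]; ring)
  constructor
  · have key : (∑' n : ℤ, (α' t (n + 1) * β t n + α t (n + 1) * β' t n)) = 0 := by
      have heq : ∀ n : ℤ, α' t (n + 1) * β t n + α t (n + 1) * β' t n =
          (fun n => Complex.I * F1 n) n - (fun n => Complex.I * F1 n) (n+1) := by
        intro n
        have h1 := hAL1 t (n+1)
        simp only [add_sub_cancel_right] at h1
        have h2 := hAL2 t n
        simp only [hF1def, add_sub_cancel_right]
        linear_combination (Complex.I * β t n) * h1 + (Complex.I * α t (n+1)) * h2 +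
          (α' t (n+1) * β t n + α t (n+1) * β' t n) * Complex.I_mul_I
      rw [tsum_congr heq]
      exact AL_tele _ (hsF1.mul_left Complex.I)
    exact key ▸ hterm1 t
  · have key : (∑' n : ℤ, (α' t n * β t (n + 1) + α t n * β' t (n + 1))) = 0 := by
      have heq : ∀ n : ℤ, α' t n * β t (n + 1) + α t n * β' t (n + 1) =
          (fun n => Complex.I * F2 n) n - (fun n => Complex.I * F2 n) (n+1) := by
        intro n
        have h1 := hAL1 t n
        have h2 := hAL2 t (n+1)
        simp only [add_sub_cancel_right] at h2
        simp only [hF2def, add_sub_cancel_right]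
        linear_combination (Complex.I * β t (n+1)) * h1 + (Complex.I * α t n) * h2 +
          (α' t n * β t (n+1) + α t n * β' t (n+1)) * Complex.I_mul_I
      rw [tsum_congr heq]
      exact AL_tele _ (hsF2.mul_left Complex.I)
    exact key ▸ hterm2 t
end

section
/- Let α, β : ℤ × ℝ → ℂ satisfy the first Ablowitz–Ladik flow −iα_t = γ(c₀₋α⁻ + c₀₊α⁺) and −iβ_t = −γ(c₀₊β⁻ + c₀₋β⁺) with γ = 1 − αβ. Then the density ρ₁ := α⁺β satisfies the local conservation law ∂_t(α⁺β) = i(S⁺ − I)(−c₀₋ αβ + c₀₊ α⁺β⁻γ). -/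
/-- Under the AL₍₁,₁₎ flow `∂_tα = iγ(c₀₋α⁻ + c₀₊α⁺)`, `∂_tβ = −iγ(c₀₊β⁻ + c₀₋β⁺)`
with `γ = 1 − αβ`, the density `ρ₁ = α⁺β` satisfies the local conservation law
`∂_t(α⁺β) = i(S⁺ − I)(−c₀₋ αβ + c₀₊ α⁺β⁻γ)`. -/
theorem stmt13 (α β : ℝ → ℤ → ℂ) (c0p c0m : ℂ)
    (hα : ∀ (t : ℝ) (n : ℤ), HasDerivAt (fun s => α s n)
      (Complex.I * (1 - α t n * β t n) * (c0m * α t (n - 1) + c0p * α t (n + 1))) t)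
    (hβ : ∀ (t : ℝ) (n : ℤ), HasDerivAt (fun s => β s n)
      (-(Complex.I * (1 - α t n * β t n) * (c0p * β t (n - 1) + c0m * β t (n + 1)))) t)
    (J : ℝ → ℤ → ℂ)
    (hJ : ∀ (t : ℝ) (n : ℤ), J t n = -c0m * α t n * β t n
      + c0p * α t (n + 1) * β t (n - 1) * (1 - α t n * β t n)) :
    ∀ (t : ℝ) (n : ℤ),
      HasDerivAt (fun s => α s (n + 1) * β s n)
        (Complex.I * (J t (n + 1) - J t n)) t := by
  intro t n
  have h : HasDerivAt (fun s => α s (n + 1) * β s n) _ t := (hα t (n + 1)).mul (hβ t n)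
  convert h using 1
  rw [hJ, hJ]
  have e1 : n + 1 - 1 = n := by ring
  rw [e1]
  ring
end

section
/- Let α, β : ℤ × ℝ → ℂ satisfy the AL₍₁,₁₎ flow ∂_tα = iγ(c₀₋α⁻ + c₀₊α⁺), ∂_tβ = −iγ(c₀₊β⁻ + c₀₋β⁺), where γ = 1 − αβ. Then the second conserved density ρ₂ = −(1/2)(α⁺β)² + γα⁺β⁻ satisfies ∂_t ρ₂ = i(S⁺ − I)[γ(−c₀₋ αβ⁻ − c₀₊ αα⁺(β⁻)² + c₀₊ γ⁻α⁺β⁻⁻)]. -/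
/-!
Along the flow, the time derivative of `ρ₂(n)` is, by the product rule, the first variation of
`ρ₂(n)` in the direction of the flow's vector field. Both are polynomials in the finitely many
lattice values `α(n-2), …, α(n+2)`, `β(n-2), …, β(n+2)`, and the variation equals
`i (J(n+1) - J(n))` as a polynomial identity, valid over any commutative ring.
-/

namespace AblowitzLadik

section Algebra

variable {R : Type*} [CommRing R]

/-- The first variation of `ρ₂ = -(1/2)(a⁺b)² + (1 - ab)a⁺b⁻` at `(a, b)` in the direction
`(a', b')`. -/
def densityVariation (a b a' b' : ℤ → R) (n : ℤ) : R :=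
  -(a (n + 1) * b n) * (a' (n + 1) * b n + a (n + 1) * b' n)
    - (a' n * b n + a n * b' n) * a (n + 1) * b (n - 1)
    + (1 - a n * b n) * (a' (n + 1) * b (n - 1) + a (n + 1) * b' (n - 1))

/-- The AL₍₁,₁₎ vector field is `i • (velocityα, velocityβ)`. -/
def velocityα (cp cm : R) (a b : ℤ → R) (n : ℤ) : R :=
  (1 - a n * b n) * (cm * a (n - 1) + cp * a (n + 1))

def velocityβ (cp cm : R) (a b : ℤ → R) (n : ℤ) : R :=
  -((1 - a n * b n) * (cp * b (n - 1) + cm * b (n + 1)))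

def flux (cp cm : R) (a b : ℤ → R) (n : ℤ) : R :=
  (1 - a n * b n) * (-cm * a n * b (n - 1) - cp * a n * a (n + 1) * b (n - 1) ^ 2
    + cp * (1 - a (n - 1) * b (n - 1)) * a (n + 1) * b (n - 2))

theorem densityVariation_velocity (k cp cm : R) (a b : ℤ → R) (n : ℤ) :
    densityVariation a b (fun m => k * velocityα cp cm a b m)
        (fun m => k * velocityβ cp cm a b m) n
      = k * (flux cp cm a b (n + 1) - flux cp cm a b n) := by
  have h₁ : n + 1 - 1 = n := by ring
  have h₂ : n + 1 - 2 = n - 1 := by ring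
  have h₃ : n - 1 + 1 = n := by ring
  have h₄ : n - 1 - 1 = n - 2 := by ring
  simp only [densityVariation, velocityα, velocityβ, flux, h₁, h₂, h₃, h₄]
  ring

end Algebra

noncomputable def density (a b : ℤ → ℂ) (n : ℤ) : ℂ :=
  -(1 / 2) * (a (n + 1) * b n) ^ 2 + (1 - a n * b n) * a (n + 1) * b (n - 1)

theorem hasDerivAt_density {α β : ℝ → ℤ → ℂ} {a' b' : ℤ → ℂ} {t : ℝ}
    (hα : ∀ n, HasDerivAt (fun s => α s n) (a' n) t)
    (hβ : ∀ n, HasDerivAt (fun s => β s n) (b' n) t) (n : ℤ) :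
    HasDerivAt (fun s => density (α s) (β s) n) (densityVariation (α t) (β t) a' b' n) t := by
  have hprod := (hα (n + 1)).mul (hβ n)
  have hρ := (hprod.pow 2).const_mul (-(1 / 2) : ℂ) |>.add
    ((((hα n).mul (hβ n)).const_sub 1).mul (hα (n + 1)) |>.mul (hβ (n - 1)))
  refine hρ.congr_deriv ?_
  simp only [densityVariation, Pi.mul_apply]
  ring

end AblowitzLadik

open AblowitzLadik

/-- Under the AL₍₁,₁₎ flow `∂_tα = iγ(c₀₋α⁻ + c₀₊α⁺)`, `∂_tβ = −iγ(c₀₊β⁻ + c₀₋β⁺)`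
with `γ = 1 − αβ`, the second conserved density `ρ₂ = −(1/2)(α⁺β)² + γα⁺β⁻` satisfies
`∂_tρ₂ = i(S⁺ − I)[γ(−c₀₋αβ⁻ − c₀₊αα⁺(β⁻)² + c₀₊γ⁻α⁺β⁻⁻)]`. -/
theorem stmt14 (α β : ℝ → ℤ → ℂ) (c0p c0m : ℂ)
    (hα : ∀ (t : ℝ) (n : ℤ), HasDerivAt (fun s => α s n)
      (Complex.I * (1 - α t n * β t n) * (c0m * α t (n - 1) + c0p * α t (n + 1))) t)
    (hβ : ∀ (t : ℝ) (n : ℤ), HasDerivAt (fun s => β s n)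
      (-(Complex.I * (1 - α t n * β t n) * (c0p * β t (n - 1) + c0m * β t (n + 1)))) t)
    (γ J : ℝ → ℤ → ℂ)
    (hγ : ∀ (t : ℝ) (n : ℤ), γ t n = 1 - α t n * β t n)
    (hJ : ∀ (t : ℝ) (n : ℤ), J t n = γ t n *
      (-c0m * α t n * β t (n - 1) - c0p * α t n * α t (n + 1) * (β t (n - 1)) ^ 2
        + c0p * γ t (n - 1) * α t (n + 1) * β t (n - 2))) :
    ∀ (t : ℝ) (n : ℤ),
      HasDerivAt
        (fun s => -(1 / 2) * (α s (n + 1) * β s n) ^ 2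
          + (1 - α s n * β s n) * α s (n + 1) * β s (n - 1))
        (Complex.I * (J t (n + 1) - J t n)) t := by
  intro t n
  have hJ_flux : J t = flux c0p c0m (α t) (β t) := funext fun m => by rw [hJ, hγ, hγ]; rfl
  have hρ := hasDerivAt_density
    (a' := fun m => Complex.I * velocityα c0p c0m (α t) (β t) m)
    (b' := fun m => Complex.I * velocityβ c0p c0m (α t) (β t) m)
    (fun m => (hα t m).congr_deriv (by simp only [velocityα]; ring))
    (fun m => (hβ t m).congr_deriv (by simp only [velocityβ]; ring)) n
  rwa [densityVariation_velocity, ← hJ_flux] at hρ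
end

section
/- Let 𝔣, 𝔤, 𝔥 : ℤ → ℂ and α, β : ℤ → ℂ, z ∈ ℂ \ {0}, satisfy the four linear relations z(𝔤⁻ − 𝔤) + zβ𝔣 + α𝔥⁻ = 0, zβ𝔣⁻ + α𝔥 − 𝔤 + 𝔤⁻ = 0, −𝔣 + z𝔣⁻ + α(𝔤 + 𝔤⁻) = 0, zβ(𝔤⁻ + 𝔤) − z𝔥 + 𝔥⁻ = 0, and the quadratic relation 𝔤² − 𝔣𝔥 = 1. Then, with γ = 1 − αβ, the identity 𝔣·((z𝔣 + α⁺𝔤)² − (α⁺)²) = z γ⁺ 𝔣² 𝔣⁺ holds pointwise on ℤ. -/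
/-!
At a fixed site the identity is `𝔣` times `(z𝔣 + α⁺𝔤)² − (α⁺)² = zγ⁺𝔣𝔣⁺`, which needs only three
relations taken at `n + 1`. The third linear relation gives `z𝔣 + α⁺𝔤 = 𝔣⁺ − α⁺𝔤⁺`; the quadratic
relation `(𝔤⁺)² − 1 = 𝔣⁺𝔥⁺` then factors `𝔣⁺` out of the difference of squares, and the second linear
relation evaluates the remaining factor.
-/

theorem sq_sub_sq_eq_of_step_relations {R : Type*} [CommRing R] {z a b f g F G H : R}
    (hF : -F + z * f + a * (G + g) = 0) (hG : z * b * f + a * H - G + g = 0)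
    (hdet : G ^ 2 - F * H = 1) :
    (z * f + a * g) ^ 2 - a ^ 2 = z * (1 - a * b) * f * F := by
  calc (z * f + a * g) ^ 2 - a ^ 2
      = (F - a * G) ^ 2 - a ^ 2 := by linear_combination (z * f + a * g + F - a * G) * hF
    _ = F * (F - 2 * a * G + a ^ 2 * H) := by linear_combination a ^ 2 * hdet
    _ = F * (z * f + a * (g - G + a * H)) := by linear_combination -F * hF
    _ = z * (1 - a * b) * f * F := by linear_combination a * F * hG

theorem stmt17_general (α β f g h : ℤ → ℂ) (z : ℂ)
    (h2 : ∀ n : ℤ, z * β n * f (n - 1) + α n * h n - g n + g (n - 1) = 0)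
    (h3 : ∀ n : ℤ, -f n + z * f (n - 1) + α n * (g n + g (n - 1)) = 0)
    (h5 : ∀ n : ℤ, (g n) ^ 2 - f n * h n = 1) :
    ∀ n : ℤ,
      f n * ((z * f n + α (n + 1) * g n) ^ 2 - (α (n + 1)) ^ 2)
        = z * (1 - α (n + 1) * β (n + 1)) * (f n) ^ 2 * f (n + 1) := by
  intro n
  have hF := h3 (n + 1)
  have hG := h2 (n + 1)
  rw [add_sub_cancel_right] at hF hG
  rw [sq_sub_sq_eq_of_step_relations hF hG (h5 (n + 1))]
  ring

/-- If `𝔣, 𝔤, 𝔥` satisfy the four linear relations and the quadratic relation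
`𝔤² − 𝔣𝔥 = 1`, then `𝔣((z𝔣 + α⁺𝔤)² − (α⁺)²) = zγ⁺𝔣²𝔣⁺` with `γ = 1 − αβ`. -/
theorem stmt17 (α β f g h : ℤ → ℂ) (z : ℂ) (hz : z ≠ 0)
    (h1 : ∀ n : ℤ, z * (g (n - 1) - g n) + z * β n * f n + α n * h (n - 1) = 0)
    (h2 : ∀ n : ℤ, z * β n * f (n - 1) + α n * h n - g n + g (n - 1) = 0)
    (h3 : ∀ n : ℤ, -f n + z * f (n - 1) + α n * (g n + g (n - 1)) = 0)
    (h4 : ∀ n : ℤ, z * β n * (g (n - 1) + g n) - z * h n + h (n - 1) = 0)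
    (h5 : ∀ n : ℤ, (g n) ^ 2 - f n * h n = 1) :
    ∀ n : ℤ,
      f n * ((z * f n + α (n + 1) * g n) ^ 2 - (α (n + 1)) ^ 2)
        = z * (1 - α (n + 1) * β (n + 1)) * (f n) ^ 2 * f (n + 1) :=
  stmt17_general α β f g h z h2 h3 h5
end
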